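/- arXiv:2211.10090 — 4 statements merged into one kernel-verified Lean document; each statement's English description precedes it below -/
import Mathlib

section
/- Let n, k be integers with 0 ≤ 3k ≤ n. Then the holomorphic functions Δ^i·E₄^{n−3i} on ℍ, for 0 ≤ i ≤ k, are linearly independent over ℂ, and likewise the functions Δ^i·E₄^{n−3i}·E₆, for 0 ≤ i ≤ k, are linearly independent over ℂ. -/
open Complex Finset

noncomputable def E2 (τ : ℂ) : ℂ :=
  1 - 24 * ∑' n : ℕ, (∑ d ∈ Nat.divisors (n + 1), (d : ℂ)) *
    Complex.exp (2 * (Real.pi : ℂ) * I * τ) ^ (n + 1)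

noncomputable def E4 (τ : ℂ) : ℂ :=
  1 + 240 * ∑' n : ℕ, (∑ d ∈ Nat.divisors (n + 1), (d : ℂ) ^ 3) *
    Complex.exp (2 * (Real.pi : ℂ) * I * τ) ^ (n + 1)

noncomputable def E6 (τ : ℂ) : ℂ :=
  1 - 504 * ∑' n : ℕ, (∑ d ∈ Nat.divisors (n + 1), (d : ℂ) ^ 5) *
    Complex.exp (2 * (Real.pi : ℂ) * I * τ) ^ (n + 1)

noncomputable def Delta (τ : ℂ) : ℂ :=
  Complex.exp (2 * (Real.pi : ℂ) * I * τ) *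
    ∏' n : ℕ, (1 - Complex.exp (2 * (Real.pi : ℂ) * I * τ) ^ (n + 1)) ^ 24

/-- Serre bracket `{1, f}_k`. -/
noncomputable def serre (k : ℤ) (f : ℂ → ℂ) : ℂ → ℂ := fun τ =>
  (1 / (2 * (Real.pi : ℂ) * I)) * (deriv f τ - ((Real.pi : ℂ) * I * (k : ℂ) / 6) * E2 τ * f τ)

/-- holomorphic on the upper half plane -/
def HoloOnH (f : ℂ → ℂ) : Prop := ∀ τ : ℂ, 0 < τ.im → DifferentiableAt ℂ f τ

/-- Möbius action of `SL(2, ℤ)` on the upper half plane. -/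
noncomputable def moeb (g : Matrix.SpecialLinearGroup (Fin 2) ℤ) (τ : ℂ) : ℂ :=
  ((g 0 0 : ℂ) * τ + (g 0 1 : ℂ)) / ((g 1 0 : ℂ) * τ + (g 1 1 : ℂ))

/-- Möbius action of `SL(2, ℝ)` on the upper half plane. -/
noncomputable def moebR (g : Matrix.SpecialLinearGroup (Fin 2) ℝ) (τ : ℂ) : ℂ :=
  ((g 0 0 : ℂ) * τ + (g 0 1 : ℂ)) / ((g 1 0 : ℂ) * τ + (g 1 1 : ℂ))

/-- modular form of weight `k` for `Γ ≤ SL(2, ℤ)` -/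
def IsModularForm (Γ : Subgroup (Matrix.SpecialLinearGroup (Fin 2) ℤ)) (k : ℤ)
    (f : ℂ → ℂ) : Prop :=
  HoloOnH f ∧
  (∀ g ∈ Γ, ∀ τ : ℂ, 0 < τ.im →
    f (moeb g τ) = ((g 1 0 : ℂ) * τ + (g 1 1 : ℂ)) ^ k * f τ) ∧
  (∀ g : Matrix.SpecialLinearGroup (Fin 2) ℤ, ∃ C A : ℝ, ∀ τ : ℂ, 0 < τ.im → A ≤ τ.im →
    ‖((g 1 0 : ℂ) * τ + (g 1 1 : ℂ)) ^ (-k) * f (moeb g τ)‖ ≤ C)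

/-!
As `Im τ → ∞`, `E₄` and `E₆` tend to `1` (their `q`-series have polynomially bounded
coefficients), while `Δ`, which is Mathlib's discriminant `q ∏ (1 - qⁿ)²⁴`, tends to `0` without
vanishing on `ℍ`. So `Δ^i E₄^{n-3i}` and `Δ^i E₄^{n-3i} E₆` are asymptotic to `Δ^i`: in a
vanishing linear combination, divide by `Δ^m` for the least `m` with a nonzero coefficient and
let `Im τ → ∞`.
-/

open Filter Topology ArithmeticFunction
open UpperHalfPlane hiding I

theorem linearIndependent_pow_mul_of_tendsto {α 𝕜 : Type*} [NormedField 𝕜] {l : Filter α}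
    [l.NeBot] {δ : α → 𝕜} (hδ : Tendsto δ l (𝓝 0)) (hδ_ne : ∀ᶠ x in l, δ x ≠ 0)
    {u : ℕ → α → 𝕜} {b : ℕ → 𝕜} (hu : ∀ i, Tendsto (u i) l (𝓝 (b i))) (hb : ∀ i, b i ≠ 0) :
    LinearIndependent 𝕜 (fun i x => δ x ^ i * u i x) := by
  rw [linearIndependent_iff']
  intro s c hsum i
  induction i using Nat.strong_induction_on with
  | _ i ih =>
  intro hi
  have hterm : ∀ j ∈ s, Tendsto (fun x => c j * (δ x ^ j * u j x) / δ x ^ i) l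
      (𝓝 (if j = i then c i * b i else 0)) := by
    intro j hj
    rcases lt_trichotomy j i with hlt | rfl | hgt
    · simp [ih j hlt hj, hlt.ne]
    · simp only [if_true]
      refine ((hu j).const_mul (c j)).congr' ?_
      filter_upwards [hδ_ne] with x hx
      field_simp
    · obtain ⟨d, hd⟩ := Nat.exists_eq_add_of_lt hgt
      have hlim : Tendsto (fun x => c j * (δ x ^ (d + 1) * u j x)) l (𝓝 0) := by
        simpa using ((hδ.pow (d + 1)).mul (hu j)).const_mul (c j)
      rw [if_neg hgt.ne']
      refine hlim.congr' ?_
      filter_upwards [hδ_ne] with x hx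
      rw [hd]
      field_simp
      ring
  have hlim := tendsto_finsetSum s hterm
  rw [Finset.sum_ite_eq' s i, if_pos hi] at hlim
  have hzero : (fun x => ∑ j ∈ s, c j * (δ x ^ j * u j x) / δ x ^ i) = fun _ => 0 := by
    funext x
    have hx := congrFun hsum x
    simp only [Finset.sum_apply, Pi.smul_apply, smul_eq_mul, Pi.zero_apply] at hx
    rw [← Finset.sum_div, hx, zero_div]
  rw [hzero] at hlim
  exact (mul_eq_zero.mp (tendsto_nhds_unique tendsto_const_nhds hlim).symm).resolve_right (hb i)

theorem LinearIndependent.comp_right_of_surjective {ι R M α β : Type*} [Semiring R]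
    [AddCommMonoid M] [Module R M] {v : ι → β → M} (hv : LinearIndependent R v) {f : α → β}
    (hf : Function.Surjective f) : LinearIndependent R (fun i => v i ∘ f) :=
  hv.map_injOn (LinearMap.funLeft R M f)
    (LinearMap.funLeft_injective_of_surjective R M f hf).injOn

theorem tendsto_tsum_mul_pow_succ_nhds_zero {𝕜 : Type*} [NormedField 𝕜] [CompleteSpace 𝕜]
    {a : ℕ → 𝕜} {r : ℝ} (hr : 0 < r) (ha : Summable fun n => ‖a n‖ * r ^ (n + 1)) :
    Tendsto (fun q : 𝕜 => ∑' n, a n * q ^ (n + 1)) (𝓝 0) (𝓝 0) := by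
  have h := tendsto_tsum_of_dominated_convergence (𝓕 := 𝓝 (0 : 𝕜)) (g := fun _ => (0 : 𝕜))
    (f := fun q n => a n * q ^ (n + 1)) ha
    (fun n => by simpa using ((continuous_pow (n + 1)).tendsto (0 : 𝕜)).const_mul (a n)) ?_
  · simpa using h
  filter_upwards [Metric.closedBall_mem_nhds (0 : 𝕜) hr] with q hq n
  rw [norm_mul, norm_pow]
  gcongr
  exact mem_closedBall_zero_iff.mp hq

theorem summable_norm_divisorSum_pow_mul_geometric (k : ℕ) {r : ℝ} (hr₀ : 0 ≤ r) (hr₁ : r < 1) :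
    Summable fun n : ℕ => ‖∑ d ∈ (n + 1).divisors, (d : ℂ) ^ k‖ * r ^ (n + 1) := by
  have hgeom : Summable fun n : ℕ => ((n + 1 : ℕ) : ℝ) ^ (k + 1) * r ^ (n + 1) :=
    (summable_nat_add_iff (f := fun n : ℕ => (n : ℝ) ^ (k + 1) * r ^ n) 1).mpr
      (summable_pow_mul_geometric_of_norm_lt_one (k + 1) (by rwa [Real.norm_of_nonneg hr₀]))
  refine hgeom.of_nonneg_of_le (fun n => by positivity) fun n => ?_
  gcongr
  calc ‖∑ d ∈ (n + 1).divisors, (d : ℂ) ^ k‖ = ((sigma k (n + 1) : ℕ) : ℝ) := by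
        rw [sigma_apply, ← Complex.norm_natCast]
        push_cast
        rfl
    _ ≤ ((n + 1 : ℕ) : ℝ) ^ (k + 1) := mod_cast sigma_le_pow_succ k (n + 1)

theorem tendsto_tsum_divisorSum_pow_mul_cexp_pow_atImInfty (k : ℕ) :
    Tendsto (fun τ : ℍ => ∑' n : ℕ, (∑ d ∈ (n + 1).divisors, (d : ℂ) ^ k) *
      Complex.exp (2 * (Real.pi : ℂ) * I * τ) ^ (n + 1)) atImInfty (𝓝 0) := by
  have hq : Tendsto (fun τ : ℍ => Complex.exp (2 * (Real.pi : ℂ) * I * τ)) atImInfty (𝓝 0) := by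
    simpa [Function.Periodic.qParam] using qParam_tendsto_atImInfty zero_lt_one
  exact (tendsto_tsum_mul_pow_succ_nhds_zero (by norm_num : (0 : ℝ) < 1 / 2)
    (summable_norm_divisorSum_pow_mul_geometric k (by norm_num) (by norm_num))).comp hq

theorem tendsto_E4_atImInfty : Tendsto (fun τ : ℍ => E4 τ) atImInfty (𝓝 1) := by
  simpa [E4] using
    ((tendsto_tsum_divisorSum_pow_mul_cexp_pow_atImInfty 3).const_mul 240).const_add 1

theorem tendsto_E6_atImInfty : Tendsto (fun τ : ℍ => E6 τ) atImInfty (𝓝 1) := by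
  simpa [E6] using
    ((tendsto_tsum_divisorSum_pow_mul_cexp_pow_atImInfty 5).const_mul 504).const_sub 1

theorem Delta_eq_discriminant (τ : ℍ) : Delta τ = ModularForm.discriminant τ := by
  rw [ModularForm.discriminant_eq_q_prod]
  simp [Delta, Function.Periodic.qParam, ModularForm.eta_q]

theorem tendsto_Delta_atImInfty : Tendsto (fun τ : ℍ => Delta τ) atImInfty (𝓝 0) :=
  (ModularForm.discriminant_isZeroAtImInfty : Tendsto _ _ _).congr fun τ =>
    (Delta_eq_discriminant τ).symm

theorem Delta_ne_zero (τ : ℍ) : Delta τ ≠ 0 :=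
  Delta_eq_discriminant τ ▸ ModularForm.discriminant_ne_zero τ

theorem linearIndependent_Delta_pow_mul_E4_pow_mul (n k : ℕ) {g : ℍ → ℂ}
    (hg : Tendsto g atImInfty (𝓝 1)) :
    LinearIndependent ℂ (fun (i : Fin (k + 1)) (τ : ℍ) =>
      Delta τ ^ (i : ℕ) * E4 τ ^ (n - 3 * (i : ℕ)) * g τ) := by
  have h := linearIndependent_pow_mul_of_tendsto tendsto_Delta_atImInfty
    (.of_forall Delta_ne_zero) (fun i => (tendsto_E4_atImInfty.pow (n - 3 * i)).mul hg)
    (fun _ => by norm_num)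
  simpa only [Function.comp_def, mul_assoc] using h.comp Fin.val Fin.val_injective

theorem delta_E4_powers_linearIndependent_general (n k : ℕ) :
    LinearIndependent ℂ (fun i : Fin (k + 1) => fun τ : {z : ℂ // 0 < z.im} =>
      Delta τ.1 ^ (i : ℕ) * E4 τ.1 ^ (n - 3 * (i : ℕ))) ∧
    LinearIndependent ℂ (fun i : Fin (k + 1) => fun τ : {z : ℂ // 0 < z.im} =>
      Delta τ.1 ^ (i : ℕ) * E4 τ.1 ^ (n - 3 * (i : ℕ)) * E6 τ.1) := by
  have hmk : Function.Surjective fun τ : {z : ℂ // 0 < z.im} => UpperHalfPlane.mk τ.1 τ.2 :=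
    fun τ => ⟨⟨τ, τ.2⟩, rfl⟩
  have h1 := (linearIndependent_Delta_pow_mul_E4_pow_mul n k tendsto_const_nhds
    ).comp_right_of_surjective hmk
  have h6 := (linearIndependent_Delta_pow_mul_E4_pow_mul n k tendsto_E6_atImInfty
    ).comp_right_of_surjective hmk
  exact ⟨by simpa only [mul_one, Function.comp_def] using h1, h6⟩

/-- For `0 ≤ 3k ≤ n`, the functions `Δ^i·E₄^{n−3i}` (`0 ≤ i ≤ k`) on `ℍ`
are linearly independent over `ℂ`, and likewise the functions `Δ^i·E₄^{n−3i}·E₆`. -/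
theorem delta_E4_powers_linearIndependent (n k : ℕ) (hkn : 3 * k ≤ n) :
    LinearIndependent ℂ (fun i : Fin (k + 1) => fun τ : {z : ℂ // 0 < z.im} =>
      Delta τ.1 ^ (i : ℕ) * E4 τ.1 ^ (n - 3 * (i : ℕ))) ∧
    LinearIndependent ℂ (fun i : Fin (k + 1) => fun τ : {z : ℂ // 0 < z.im} =>
      Delta τ.1 ^ (i : ℕ) * E4 τ.1 ^ (n - 3 * (i : ℕ)) * E6 τ.1) :=
  delta_E4_powers_linearIndependent_general n k
end

section
/- Let n ≥ 0 be an integer, let g = ((α,β),(γ,δ)) ∈ SL(2,ℝ), and let f be a holomorphic function on ℍ that is weakly modular of weight −n for g. Then for every integer k with 0 ≤ k ≤ n and every τ ∈ ℍ: ((−1)^k·(n−k)!/k!)·f^{(k)}(gτ) = Σ_{m=0}^k [γ^{k−m}·(γτ+δ)^{−n+k+m}/(k−m)!]·((−1)^m·(n−m)!/m!)·f^{(m)}(τ). -/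
open Complex Finset

/-! With `a m = (-1)^m (n-m)!/m! f^(m)` one has `a m' = (m-n)(m+1) a (m+1)`. Hence the derivative
of each side of the identity for `k` is `(k-n)(k+1)/(cτ+d)^2` times the corresponding side for
`k + 1`: on the left by the chain rule, since `(gτ)' = (cτ+d)^(-2)`, on the right after regrouping
the differentiated sum by `a m`. For `k < n` this factor is nonzero and cancels; the case `k = 0`
is the modularity of `f`. -/

lemma moebR_eq_coe_smul (g : Matrix.SpecialLinearGroup (Fin 2) ℝ) (z : UpperHalfPlane) :
    moebR g z = ↑(g • z) := by
  rw [UpperHalfPlane.coe_specialLinearGroup_apply]; rfl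

lemma im_moebR_pos (g : Matrix.SpecialLinearGroup (Fin 2) ℝ) {τ : ℂ} (hτ : 0 < τ.im) :
    0 < (moebR g τ).im := by
  rw [moebR_eq_coe_smul g ⟨τ, hτ⟩]
  exact (g • (⟨τ, hτ⟩ : UpperHalfPlane)).im_pos

lemma moebR_denom_ne_zero (g : Matrix.SpecialLinearGroup (Fin 2) ℝ) {τ : ℂ} (hτ : 0 < τ.im) :
    (g 1 0 : ℂ) * τ + g 1 1 ≠ 0 := by
  simpa [UpperHalfPlane.denom] using
    UpperHalfPlane.denom_ne_zero_of_im (Matrix.SpecialLinearGroup.mapGL ℝ g) hτ.ne'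

lemma hasDerivAt_moebR (g : Matrix.SpecialLinearGroup (Fin 2) ℝ) {τ : ℂ}
    (hJ : (g 1 0 : ℂ) * τ + g 1 1 ≠ 0) :
    HasDerivAt (moebR g) (((g 1 0 : ℂ) * τ + g 1 1) ^ 2)⁻¹ τ := by
  have hdet : (g 0 0 : ℂ) * g 1 1 - g 0 1 * g 1 0 = 1 := by
    have := g.det_coe
    rw [Matrix.det_fin_two] at this
    exact_mod_cast this
  refine (((hasDerivAt_id τ).const_mul (g 0 0 : ℂ)).add_const (g 0 1 : ℂ)).div
    (((hasDerivAt_id τ).const_mul (g 1 0 : ℂ)).add_const (g 1 1 : ℂ)) hJ |>.congr_deriv ?_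
  simp only [id, mul_one]
  field_simp
  linear_combination hdet

lemma HoloOnH.hasDerivAt_iteratedDeriv {f : ℂ → ℂ} (hf : HoloOnH f) (m : ℕ) {τ : ℂ}
    (hτ : 0 < τ.im) : HasDerivAt (iteratedDeriv m f) (iteratedDeriv (m + 1) f τ) τ := by
  have han : AnalyticOnNhd ℂ f {z : ℂ | 0 < z.im} :=
    DifferentiableOn.analyticOnNhd (fun z hz ↦ (hf z hz).differentiableWithinAt)
      UpperHalfPlane.isOpen_upperHalfPlaneSet
  rw [iteratedDeriv_succ, iteratedDeriv_eq_iterate]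
  exact (han.iterated_deriv m τ hτ).differentiableAt.hasDerivAt

lemma sum_range_add_comp_succ {M : Type*} [AddCommMonoid M] (f g : ℕ → M) (k : ℕ)
    (hf : f (k + 1) = 0) (hg : g 0 = 0) :
    ∑ m ∈ range (k + 1), (f m + g (m + 1)) = ∑ m ∈ range (k + 2), (f m + g m) := by
  rw [sum_add_distrib, sum_add_distrib, sum_range_succ f (k + 1), sum_range_succ' g (k + 1),
    hf, hg, add_zero, add_zero]

section DerivTransformSum

variable (w : ℤ) (c d : ℂ) (A : ℕ → ℂ → ℂ)

noncomputable def derivTransformSum (k : ℕ) (τ : ℂ) : ℂ :=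
  ∑ m ∈ range (k + 1),
    c ^ (k - m) * (c * τ + d) ^ (w + k + m) / ((k - m).factorial : ℂ) * A m τ

lemma derivTransformSum_zero (τ : ℂ) :
    derivTransformSum w c d A 0 τ = (c * τ + d) ^ w * A 0 τ := by
  simp [derivTransformSum]

variable {w c d A}

lemma hasDerivAt_derivTransformSum {k : ℕ} {τ : ℂ} (hJ : c * τ + d ≠ 0)
    (hA : ∀ m ≤ k, HasDerivAt (A m) ((w + m : ℂ) * (m + 1) * A (m + 1) τ) τ) :
    HasDerivAt (derivTransformSum w c d A k)
      ((w + k : ℂ) * (k + 1) / (c * τ + d) ^ 2 * derivTransformSum w c d A (k + 1) τ) τ := by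
  set J := c * τ + d
  -- The factors `k + 1 - m` in `a` and `m` in `b` vanish at the ends of the range, so the
  -- shifted sums merge; `a m + b m` collapses because
  -- `(w+k+m)(k+1-m) + (w+m-1)m = (w+k)(k+1)`.
  let u : ℕ → ℂ := fun m ↦ c ^ (k + 1 - m) * J ^ (w + k + m - 1) * A m τ
  let a : ℕ → ℂ := fun m ↦ (w + k + m : ℂ) * (k + 1 - m) / ((k + 1 - m).factorial : ℂ)
  let b : ℕ → ℂ := fun m ↦ (w + m - 1 : ℂ) * m / ((k + 1 - m).factorial : ℂ)
  have hterm : ∀ m ∈ range (k + 1), HasDerivAt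
      (fun σ ↦ c ^ (k - m) * (c * σ + d) ^ (w + k + m) / ((k - m).factorial : ℂ) * A m σ)
      (a m * u m + b (m + 1) * u (m + 1)) τ := by
    intro m hm
    have hpow : HasDerivAt (fun σ ↦ (c * σ + d) ^ (w + k + m))
        ((w + k + m : ℤ) * J ^ (w + k + m - 1) * (c * 1)) τ := by
      exact (hasDerivAt_zpow (w + k + m) J (Or.inl hJ)).comp τ
        (((hasDerivAt_id' τ).const_mul c).add_const d)
    refine ((hpow.const_mul _).div_const _).mul (hA m (mem_range_succ_iff.mp hm))
      |>.congr_deriv ?_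
    obtain ⟨j, rfl⟩ := Nat.exists_eq_add_of_le (mem_range_succ_iff.mp hm)
    have hexp : w + ((m + j : ℕ) : ℤ) + ((m + 1 : ℕ) : ℤ) - 1 = w + (m + j : ℕ) + m := by
      push_cast; ring
    simp only [a, b, u, hexp, show m + j + 1 - m = j + 1 by omega,
      show m + j + 1 - (m + 1) = j by omega, show m + j - m = j by omega,
      Nat.factorial_succ, pow_succ]
    push_cast
    field_simp
    ring
  have hsum := sum_range_add_comp_succ (fun m ↦ a m * u m) (fun m ↦ b m * u m) k
    (by simp [a]) (by simp [b])
  refine (HasDerivAt.fun_sum hterm).congr_deriv ?_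
  rw [hsum, derivTransformSum, mul_sum]
  refine sum_congr rfl fun m hm ↦ ?_
  have hab : a m + b m = (w + k : ℂ) * (k + 1) / ((k + 1 - m).factorial : ℂ) := by
    simp only [a, b, ← add_div]
    ring
  rw [← add_mul, hab]
  simp only [u]
  rw [show w + ((k + 1 : ℕ) : ℤ) + m = (w + k + m - 1) + 2 by push_cast; ring, zpow_add₀ hJ]
  field_simp

end DerivTransformSum

noncomputable def scaledIteratedDeriv (n : ℕ) (f : ℂ → ℂ) (m : ℕ) (τ : ℂ) : ℂ :=
  (-1 : ℂ) ^ m * ((n - m).factorial : ℂ) / (m.factorial : ℂ) * iteratedDeriv m f τ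

lemma HoloOnH.hasDerivAt_scaledIteratedDeriv {n : ℕ} {f : ℂ → ℂ} (hf : HoloOnH f) {m : ℕ}
    (hm : m < n) {τ : ℂ} (hτ : 0 < τ.im) :
    HasDerivAt (scaledIteratedDeriv n f m)
      ((-n + m : ℂ) * (m + 1) * scaledIteratedDeriv n f (m + 1) τ) τ := by
  refine (hf.hasDerivAt_iteratedDeriv m hτ).const_mul _ |>.congr_deriv ?_
  obtain ⟨j, rfl⟩ := Nat.exists_eq_add_of_lt hm
  simp only [scaledIteratedDeriv, show m + j + 1 - m = j + 1 by omega,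
    show m + j + 1 - (m + 1) = j by omega, Nat.factorial_succ, pow_succ]
  push_cast
  field_simp
  ring

theorem scaledIteratedDeriv_moebR {n : ℕ} {g : Matrix.SpecialLinearGroup (Fin 2) ℝ}
    {f : ℂ → ℂ} (hf : HoloOnH f)
    (hmod : ∀ τ : ℂ, 0 < τ.im →
      f (moebR g τ) = ((g 1 0 : ℂ) * τ + (g 1 1 : ℂ)) ^ (-(n : ℤ)) * f τ) :
    ∀ k ≤ n, ∀ τ : ℂ, 0 < τ.im → scaledIteratedDeriv n f k (moebR g τ) =
      derivTransformSum (-n) (g 1 0) (g 1 1) (scaledIteratedDeriv n f) k τ := by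
  intro k
  induction k with
  | zero =>
    intro _ τ hτ
    simp [scaledIteratedDeriv, derivTransformSum_zero, hmod τ hτ]
    ring
  | succ k ih =>
    intro hk τ hτ
    have hJ := moebR_denom_ne_zero g hτ
    have hlhs := (hf.hasDerivAt_scaledIteratedDeriv hk (im_moebR_pos g hτ)).comp τ
      (hasDerivAt_moebR g hJ)
    have hrhs := hasDerivAt_derivTransformSum (w := -n) (k := k) hJ fun m hm ↦ by
      simpa using hf.hasDerivAt_scaledIteratedDeriv (m := m) (by omega) hτ
    have hsame : (fun σ ↦ scaledIteratedDeriv n f k (moebR g σ)) =ᶠ[nhds τ]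
        derivTransformSum (-n) (g 1 0) (g 1 1) (scaledIteratedDeriv n f) k := by
      filter_upwards [UpperHalfPlane.isOpen_upperHalfPlaneSet.mem_nhds hτ] with σ hσ
      exact ih (by omega) σ hσ
    have hderiv := hlhs.unique (hrhs.congr_of_eventuallyEq hsame)
    have hc : (-n + k : ℂ) * (k + 1) / ((g 1 0 : ℂ) * τ + g 1 1) ^ 2 ≠ 0 := by
      have hnk : (-n + k : ℂ) ≠ 0 := by norm_cast; omega
      exact div_ne_zero (mul_ne_zero hnk k.cast_add_one_ne_zero) (pow_ne_zero 2 hJ)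
    apply mul_left_cancel₀ hc
    push_cast at hderiv ⊢
    linear_combination hderiv

/-- derivative transformation for weakly modular functions of weight `−n`. -/
theorem deriv_transform_neg_weight (n : ℕ) (g : Matrix.SpecialLinearGroup (Fin 2) ℝ)
    (f : ℂ → ℂ) (hf : HoloOnH f)
    (hmod : ∀ τ : ℂ, 0 < τ.im →
      f (moebR g τ) = ((g 1 0 : ℂ) * τ + (g 1 1 : ℂ)) ^ (-(n : ℤ)) * f τ) :
    ∀ k : ℕ, k ≤ n → ∀ τ : ℂ, 0 < τ.im →
      ((-1 : ℂ) ^ k * ((n - k).factorial : ℂ) / (k.factorial : ℂ))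
          * iteratedDeriv k f (moebR g τ)
        = ∑ m ∈ Finset.range (k + 1),
            ((g 1 0 : ℂ) ^ (k - m)
                * ((g 1 0 : ℂ) * τ + (g 1 1 : ℂ)) ^ (-(n : ℤ) + (k : ℤ) + (m : ℤ))
                / ((k - m).factorial : ℂ))
              * ((-1 : ℂ) ^ m * ((n - m).factorial : ℂ) / (m.factorial : ℂ))
              * iteratedDeriv m f τ := by
  intro k hk τ hτ
  simpa only [scaledIteratedDeriv, derivTransformSum, mul_assoc] using
    scaledIteratedDeriv_moebR hf hmod k hk τ hτ
end

section
/- (Bol's identity) Let n ≥ 0 be an integer, let g = ((α,β),(γ,δ)) ∈ SL(2,ℝ), and let f be a holomorphic function on ℍ that is weakly modular of weight −n for g. Then the (n+1)-st derivative f^{(n+1)} is weakly modular of weight n+2 for g; that is, f^{(n+1)}(gτ) = (γτ+δ)^{n+2}·f^{(n+1)}(τ) for all τ ∈ ℍ. -/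
open Complex Finset

/-! Write `j(τ) = cτ + d` for the lower row `(c, d)` of `g`. For every `F` holomorphic on `ℍ`,
`(d/dτ)^{n+1} (j^n · F ∘ g) = F^{(n+1)} ∘ g / j^{n+2}`, by induction on `n`: as `j'' = 0`,
Leibniz gives `D^{n+2}(j · H) = j · D^{n+2} H + (n+2) c · D^{n+1} H` for `H = j^n · F ∘ g`, and
both terms are computed from the induction hypothesis and `g' = j^{-2}`. Weak modularity of
weight `-n` says exactly that `f = j^n · f ∘ g` on `ℍ`. -/

open UpperHalfPlane (denom upperHalfPlaneSet isOpen_upperHalfPlaneSet)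

theorem iteratedDeriv_succ_affine_mul {𝕜 : Type*} [NontriviallyNormedField 𝕜] (c d : 𝕜)
    {H : 𝕜 → 𝕜} {x : 𝕜} {m : ℕ} (hH : ContDiffAt 𝕜 (m + 1) H x) :
    iteratedDeriv (m + 1) (fun z => (c * z + d) * H z) x =
      (c * x + d) * iteratedDeriv (m + 1) H x + (m + 1) * c * iteratedDeriv m H x := by
  have hderiv : deriv (fun z => c * z + d) = fun _ => c := by
    funext z
    simp
  have hvanish : ∀ i, iteratedDeriv (i + 2) (fun z => c * z + d) x = 0 := fun i => by
    rw [iteratedDeriv_succ', iteratedDeriv_succ', hderiv]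
    simp
  rw [iteratedDeriv_fun_mul (by fun_prop) hH, Finset.sum_range_succ', Finset.sum_range_succ']
  simp only [hvanish, mul_zero, Nat.reduceSubDiff, zero_mul, sum_const_zero, zero_add,
    Nat.choose_one_right, Nat.cast_add, Nat.cast_one, iteratedDeriv_succ', hderiv,
    iteratedDeriv_const, ↓reduceIte, add_tsub_cancel_right, Nat.choose_zero_right,
    iteratedDeriv_zero, one_mul, tsub_zero]
  ring

section Moebius

variable (g : Matrix.SpecialLinearGroup (Fin 2) ℝ) {τ : ℂ}

lemma denom_specialLinearGroup_apply : denom g τ = (g 1 0 : ℂ) * τ + g 1 1 := rfl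

lemma moebR_mem_upperHalfPlaneSet (hτ : τ ∈ upperHalfPlaneSet) :
    moebR g τ ∈ upperHalfPlaneSet := by
  have : moebR g τ = ↑(g • (⟨τ, hτ⟩ : UpperHalfPlane)) := by
    rw [UpperHalfPlane.coe_specialLinearGroup_apply]; rfl
  exact this ▸ (g • (⟨τ, hτ⟩ : UpperHalfPlane)).im_pos

lemma hasDerivAt_moebR_s11 (hτ : τ ∈ upperHalfPlaneSet) :
    HasDerivAt (moebR g) (denom g τ ^ 2)⁻¹ τ := by
  have hne : denom g τ ≠ 0 := UpperHalfPlane.denom_ne_zero_of_im _ hτ.ne'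
  have hdet : (g 0 0 : ℂ) * g 1 1 - g 0 1 * g 1 0 = 1 := by
    have := g.det_coe
    rw [Matrix.det_fin_two] at this
    exact_mod_cast this
  refine (((hasDerivAt_id τ).const_mul (g 0 0 : ℂ)).add_const (g 0 1 : ℂ)).div
    (((hasDerivAt_id τ).const_mul (g 1 0 : ℂ)).add_const (g 1 1 : ℂ)) hne |>.congr_deriv ?_
  rw [denom_specialLinearGroup_apply] at hne ⊢
  simp only [id, mul_one]
  field_simp
  linear_combination hdet

lemma analyticOnNhd_moebR : AnalyticOnNhd ℂ (moebR g) upperHalfPlaneSet :=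
  DifferentiableOn.analyticOnNhd
    (fun _ hτ => (hasDerivAt_moebR_s11 g hτ).differentiableAt.differentiableWithinAt)
    isOpen_upperHalfPlaneSet

lemma hasDerivAt_comp_moebR_div_denom_pow {G : ℂ → ℂ} (k : ℕ) (hτ : τ ∈ upperHalfPlaneSet)
    (hG : DifferentiableAt ℂ G (moebR g τ)) :
    HasDerivAt (fun z => G (moebR g z) / denom g z ^ k)
      (deriv G (moebR g τ) / denom g τ ^ (k + 2) -
        k * g 1 0 * G (moebR g τ) / denom g τ ^ (k + 1)) τ := by
  have hne : denom g τ ≠ 0 := UpperHalfPlane.denom_ne_zero_of_im _ hτ.ne'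
  have hdenom : HasDerivAt (fun z => denom g z) (g 1 0 : ℂ) τ := by
    simp only [denom_specialLinearGroup_apply]
    simpa using ((hasDerivAt_id τ).const_mul (g 1 0 : ℂ)).add_const (g 1 1 : ℂ)
  refine (hG.hasDerivAt.comp τ (hasDerivAt_moebR_s11 g hτ)).div (hdenom.fun_pow k)
    (pow_ne_zero _ hne) |>.congr_deriv ?_
  rcases k with _ | k
  · simp only [pow_zero, mul_one, Function.comp_apply, CharP.cast_eq_zero, zero_tsub, zero_mul,
      mul_zero, sub_zero, one_pow, div_one, zero_add, pow_one, zero_div]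
    field_simp
  · simp only [Function.comp_apply]; field_simp; push_cast; ring

theorem iteratedDeriv_denom_pow_mul_comp_moebR {F : ℂ → ℂ}
    (hF : AnalyticOnNhd ℂ F upperHalfPlaneSet) (n : ℕ) (hτ : τ ∈ upperHalfPlaneSet) :
    iteratedDeriv (n + 1) (fun z => denom g z ^ n * F (moebR g z)) τ =
      iteratedDeriv (n + 1) F (moebR g τ) / denom g τ ^ (n + 2) := by
  have hdiff : ∀ k {z}, z ∈ upperHalfPlaneSet →
      DifferentiableAt ℂ (iteratedDeriv k F) (moebR g z) := fun k z hz => by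
    rw [iteratedDeriv_eq_iterate]
    exact ((hF _ (moebR_mem_upperHalfPlaneSet g hz)).iterated_deriv k).differentiableAt
  induction n generalizing τ with
  | zero =>
    simpa using (hasDerivAt_comp_moebR_div_denom_pow g 0 hτ (hdiff 0 hτ)).deriv
  | succ n ih =>
    set H := fun z => denom g z ^ n * F (moebR g z)
    have hH : AnalyticAt ℂ H τ := by
      refine AnalyticAt.mul (by simp only [denom_specialLinearGroup_apply]; fun_prop) ?_
      exact (hF _ (moebR_mem_upperHalfPlaneSet g hτ)).comp (analyticOnNhd_moebR g τ hτ)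
    have hIH : iteratedDeriv (n + 1) H =ᶠ[nhds τ]
        fun z => iteratedDeriv (n + 1) F (moebR g z) / denom g z ^ (n + 2) := by
      filter_upwards [isOpen_upperHalfPlaneSet.mem_nhds hτ] with z hz using ih hz
    have hH' : iteratedDeriv (n + 2) H τ =
        iteratedDeriv (n + 2) F (moebR g τ) / denom g τ ^ (n + 4) -
          (n + 2) * g 1 0 * iteratedDeriv (n + 1) F (moebR g τ) / denom g τ ^ (n + 3) := by
      rw [iteratedDeriv_succ, hIH.deriv_eq,
        (hasDerivAt_comp_moebR_div_denom_pow g (n + 2) hτ (hdiff (n + 1) hτ)).deriv,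
        ← iteratedDeriv_succ]
      push_cast
      ring
    have hsplit : (fun z => denom g z ^ (n + 1) * F (moebR g z)) =
        fun z => ((g 1 0 : ℂ) * z + g 1 1) * H z := by
      funext z
      simp only [H, pow_succ', mul_assoc, denom_specialLinearGroup_apply]
    have hne : denom g τ ≠ 0 := UpperHalfPlane.denom_ne_zero_of_im _ hτ.ne'
    rw [hsplit, iteratedDeriv_succ_affine_mul _ _ hH.contDiffAt, hH', ih hτ,
      ← denom_specialLinearGroup_apply]
    field_simp
    push_cast
    ring

end Moebius

/-- Bol's identity: if `f` is holomorphic on `ℍ` and weakly modular of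
weight `−n` for `g ∈ SL(2,ℝ)`, then `f^{(n+1)}` is weakly modular of weight `n+2` for `g`. -/
theorem bol_identity (n : ℕ) (g : Matrix.SpecialLinearGroup (Fin 2) ℝ)
    (f : ℂ → ℂ) (hf : HoloOnH f)
    (hmod : ∀ τ : ℂ, 0 < τ.im →
      f (moebR g τ) = ((g 1 0 : ℂ) * τ + (g 1 1 : ℂ)) ^ (-(n : ℤ)) * f τ) :
    ∀ τ : ℂ, 0 < τ.im →
      iteratedDeriv (n + 1) f (moebR g τ)
        = ((g 1 0 : ℂ) * τ + (g 1 1 : ℂ)) ^ (n + 2) * iteratedDeriv (n + 1) f τ := by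
  intro τ hτ
  have hne : denom g τ ≠ 0 := UpperHalfPlane.denom_ne_zero_of_im _ hτ.ne'
  have hf_analytic : AnalyticOnNhd ℂ f upperHalfPlaneSet :=
    DifferentiableOn.analyticOnNhd (fun z hz => (hf z hz).differentiableWithinAt)
      isOpen_upperHalfPlaneSet
  have hf_eq : Set.EqOn f (fun z => denom g z ^ n * f (moebR g z)) upperHalfPlaneSet :=
    fun z hz => by
      show f z = denom g z ^ n * f (moebR g z)
      rw [hmod z hz, zpow_neg, zpow_natCast, ← denom_specialLinearGroup_apply,
        mul_inv_cancel_left₀ (pow_ne_zero _ (UpperHalfPlane.denom_ne_zero_of_im _ hz.ne'))]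
  rw [hf_eq.iteratedDeriv_of_isOpen isOpen_upperHalfPlaneSet (n + 1) hτ,
    iteratedDeriv_denom_pow_mul_comp_moebR g hf_analytic n hτ, ← denom_specialLinearGroup_apply]
  field_simp
end

section
/- Let n ≥ 0 be an integer and let f be a holomorphic function on ℍ. Then for every integer k ≥ 0 and all τ ∈ ℍ: (h^f_k)′(τ) = (2n+k+2)·(k+1)·h^f_{k+1}(τ) + (πi/(6·(2n)!·k!·(k+1)!))·f^{(2n+1)}(τ)·E₂^{(k)}(τ). -/
open Complex Finset

/-- The auxiliary functions `h^f_m` (depending on `n`). -/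
noncomputable def hfun (n : ℕ) (f : ℂ → ℂ) (m : ℕ) (τ : ℂ) : ℂ :=
  ((Real.pi : ℂ) * I / (6 * (m.factorial : ℂ))) *
    ∑ k ∈ Finset.range (2 * n + 1),
      iteratedDeriv k f τ * iteratedDeriv (2 * n + m - k) E2 τ
        / ((k.factorial : ℂ) * ((2 * n - k + m + 1).factorial : ℂ))

/-!
Since `1 / (j! (L - j)!) = C(L, j) / L!`, the function `h^f_m` is, up to a constant, the truncated
Leibniz-type sum `∑_{j ≤ 2n} C(2n+m+1, j) f^{(j)} E₂^{(2n+m-j)}`. Differentiating term by term and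
regrouping with Pascal's rule `C(L, j-1) + C(L, j) = C(L+1, j)` gives the corresponding sum for
`h^f_{m+1}`, except for the boundary term `j = 2n + 1` cut off by the truncation. Holomorphy of
`E₂` on `ℍ` is inherited from `EisensteinSeries.E2`, with which it agrees there.
-/

open scoped ArithmeticFunction.sigma

theorem E2_eq_eisensteinSeries_E2 {τ : ℂ} (hτ : 0 < τ.im) :
    E2 τ = EisensteinSeries.E2 ⟨τ, hτ⟩ := by
  rw [EisensteinSeries.E2_eq_tsum_cexp,
    tsum_pnat_eq_tsum_succ (f := fun n => (σ 1 n : ℂ) * cexp (2 * Real.pi * I * τ) ^ n)]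
  simp [E2, ArithmeticFunction.sigma_apply]

theorem differentiableOn_E2 : DifferentiableOn ℂ E2 {τ : ℂ | 0 < τ.im} := by
  refine (UpperHalfPlane.mdifferentiable_iff.mp E2_mdifferentiable).congr fun τ hτ => ?_
  simp [UpperHalfPlane.ofComplex_apply_of_im_pos hτ, E2_eq_eisensteinSeries_E2 hτ]

theorem DifferentiableOn.differentiableAt_iteratedDeriv {s : Set ℂ} {g : ℂ → ℂ}
    (hg : DifferentiableOn ℂ g s) (hs : IsOpen s) {z : ℂ} (hz : z ∈ s) (j : ℕ) :
    DifferentiableAt ℂ (iteratedDeriv j g) z := by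
  rw [iteratedDeriv_eq_iterate]
  exact ((hg.analyticOnNhd hs).iterated_deriv j z hz).differentiableAt

theorem Finset.sum_range_choose_succ_mul_add_trunc {R : Type*} [CommSemiring R]
    (f : ℕ → ℕ → R) (M N : ℕ) :
    ∑ i ∈ range (N + 1), ((M + 1).choose i : R) * (f (i + 1) (M - i) + f i (M + 1 - i))
      = ∑ i ∈ range (N + 1), ((M + 2).choose i : R) * f i (M + 1 - i)
        + ((M + 1).choose N : R) * f (N + 1) (M - N) := by
  induction N with
  | zero => simp [add_comm]
  | succ N ih =>
    rw [sum_range_succ, ih, sum_range_succ _ (N + 1), Nat.choose_succ_succ' (M + 1),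
      Nat.add_sub_add_right]
    push_cast
    ring

theorem hasDerivAt_sum_iteratedDeriv_mul {F G : ℂ → ℂ} {τ : ℂ}
    (hF : ∀ j, DifferentiableAt ℂ (iteratedDeriv j F) τ)
    (hG : ∀ j, DifferentiableAt ℂ (iteratedDeriv j G) τ) (c : ℕ → ℂ) {M N : ℕ} (hNM : N ≤ M) :
    HasDerivAt
      (fun z => ∑ j ∈ range (N + 1), c j * (iteratedDeriv j F z * iteratedDeriv (M - j) G z))
      (∑ j ∈ range (N + 1), c j * (iteratedDeriv (j + 1) F τ * iteratedDeriv (M - j) G τ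
        + iteratedDeriv j F τ * iteratedDeriv (M + 1 - j) G τ)) τ := by
  refine HasDerivAt.fun_sum fun j hj => ?_
  rw [show M + 1 - j = M - j + 1 by grind, iteratedDeriv_succ, iteratedDeriv_succ]
  exact ((hF j).hasDerivAt.mul (hG (M - j)).hasDerivAt).const_mul (c j)

theorem hfun_eq_sum_choose (n : ℕ) (f : ℂ → ℂ) (m : ℕ) (τ : ℂ) :
    hfun n f m τ
      = (Real.pi : ℂ) * I / (6 * (m.factorial : ℂ) * ((2 * n + m + 1).factorial : ℂ)) *
        ∑ j ∈ range (2 * n + 1), ((2 * n + m + 1).choose j : ℂ) *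
          (iteratedDeriv j f τ * iteratedDeriv (2 * n + m - j) E2 τ) := by
  rw [hfun, mul_sum, mul_sum]
  refine sum_congr rfl fun j hj => ?_
  rw [Nat.cast_choose ℂ (by grind : j ≤ 2 * n + m + 1),
    show 2 * n + m + 1 - j = 2 * n - j + m + 1 by grind]
  have : ((2 * n + m + 1).factorial : ℂ) ≠ 0 := mod_cast (2 * n + m + 1).factorial_ne_zero
  field_simp

theorem hfun_const_eq_mul_succ (n k : ℕ) :
    (Real.pi : ℂ) * I / (6 * (k.factorial : ℂ) * ((2 * n + k + 1).factorial : ℂ))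
      = ((2 * n + k + 2 : ℕ) : ℂ) * ((k : ℂ) + 1) *
        ((Real.pi : ℂ) * I
          / (6 * ((k + 1).factorial : ℂ) * ((2 * n + k + 1 + 1).factorial : ℂ))) := by
  have hk : (k.factorial : ℂ) ≠ 0 := mod_cast k.factorial_ne_zero
  have hnk : ((2 * n + k + 1).factorial : ℂ) ≠ 0 := mod_cast (2 * n + k + 1).factorial_ne_zero
  have h2nk : ((2 * n + k + 2 : ℕ) : ℂ) ≠ 0 := mod_cast (2 * n + k + 1).succ_ne_zero
  rw [Nat.factorial_succ (2 * n + k + 1), Nat.factorial_succ k]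
  push_cast at h2nk ⊢
  rw [show (2 : ℂ) * n + k + 1 + 1 = 2 * n + k + 2 by ring]
  field_simp

theorem hfun_const_mul_choose (n k : ℕ) :
    (Real.pi : ℂ) * I / (6 * (k.factorial : ℂ) * ((2 * n + k + 1).factorial : ℂ))
        * ((2 * n + k + 1).choose (2 * n) : ℂ)
      = (Real.pi : ℂ) * I
          / (6 * ((2 * n).factorial : ℂ) * (k.factorial : ℂ) * ((k + 1).factorial : ℂ)) := by
  have hnk : ((2 * n + k + 1).factorial : ℂ) ≠ 0 := mod_cast (2 * n + k + 1).factorial_ne_zero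
  rw [Nat.cast_choose ℂ (by omega), show 2 * n + k + 1 - 2 * n = k + 1 by omega]
  field_simp

/-- `(h^f_k)′ = (2n+k+2)(k+1)·h^f_{k+1} + (πi/(6·(2n)!·k!·(k+1)!))·f^{(2n+1)}·E₂^{(k)}`
on `ℍ`. -/
theorem hfun_deriv (n : ℕ) (f : ℂ → ℂ) (hf : HoloOnH f) :
    ∀ k : ℕ, ∀ τ : ℂ, 0 < τ.im →
      deriv (hfun n f k) τ
        = ((2 * n + k + 2 : ℕ) : ℂ) * ((k : ℂ) + 1) * hfun n f (k + 1) τ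
          + ((Real.pi : ℂ) * I
              / (6 * ((2 * n).factorial : ℂ) * (k.factorial : ℂ) * ((k + 1).factorial : ℂ)))
            * iteratedDeriv (2 * n + 1) f τ * iteratedDeriv k E2 τ := by
  intro k τ hτ
  have hH := UpperHalfPlane.isOpen_upperHalfPlaneSet
  have hfd := DifferentiableOn.differentiableAt_iteratedDeriv
    (fun z hz => (hf z hz).differentiableWithinAt) hH hτ
  have hEd := differentiableOn_E2.differentiableAt_iteratedDeriv hH hτ
  have hderiv := (hasDerivAt_sum_iteratedDeriv_mul hfd hEd
    (fun j => ((2 * n + k + 1).choose j : ℂ)) (M := 2 * n + k) (N := 2 * n) (by omega)).const_mul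
      ((Real.pi : ℂ) * I / (6 * (k.factorial : ℂ) * ((2 * n + k + 1).factorial : ℂ)))
  rw [show hfun n f k = _ from funext (hfun_eq_sum_choose n f k), hderiv.deriv,
    sum_range_choose_succ_mul_add_trunc (fun i j => iteratedDeriv i f τ * iteratedDeriv j E2 τ),
    hfun_eq_sum_choose, Nat.add_sub_cancel_left, show 2 * n + (k + 1) = 2 * n + k + 1 by ring,
    mul_add, ← hfun_const_mul_choose, hfun_const_eq_mul_succ]
  ring
end
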